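/- For every integer n ≥ 3 there exists a continuous map ψ from the closed unit ball B^{n-1} ⊂ ℝ^{n-1} to the special orthogonal group SO(n) such that: (i) for every x with ‖x‖ = 1, the matrix ψ(x) fixes the first standard basis vector e₁ of ℝⁿ (equivalently, ψ(x) is block diagonal of the form diag(1, B) with B ∈ SO(n-1)); and (ii) the map x ↦ ψ(x)·e₁, restricted to the open unit ball, is a homeomorphism onto the unit sphere S^{n-1} ⊂ ℝⁿ minus the point e₁. -/

import Mathlib

/-! For `x` in the closed unit ball of `ℝ^m` let `a(x) = (-√(1 - ‖x‖²), x) ∈ ℝ^(m+1)`, a unit vector.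
The Householder reflection in `a(x)` sends `e₀` to `(2‖x‖² - 1, 2√(1 - ‖x‖²) x)`, which runs once
over the unit sphere minus `e₀` as `x` runs over the open ball, with inverse
`y ↦ (y₁, …, y_m) / √(2(1 - y₀))`. On the boundary sphere `a(x) ⊥ e₀`, so `e₀` is fixed.
Composing with the reflection in a fixed unit vector orthogonal to `e₀` makes the determinant `1`
without moving `e₀`. -/

open Matrix Metric

namespace Matrix

variable {ι R : Type*} [DecidableEq ι] [CommRing R]

def householder (w : ι → R) : Matrix ι ι R :=
  1 - (2 : R) • vecMulVec w w

variable {w : ι → R}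

theorem transpose_householder : (householder w)ᵀ = householder w := by
  simp [householder, transpose_vecMulVec]

variable [Fintype ι]

theorem householder_mulVec (v : ι → R) :
    householder w *ᵥ v = v - (2 * (w ⬝ᵥ v)) • w := by
  simp [householder, sub_mulVec, smul_mulVec, vecMulVec_mulVec, smul_smul, mul_comm]

theorem householder_mulVec_of_dotProduct_eq_zero {v : ι → R} (h : w ⬝ᵥ v = 0) :
    householder w *ᵥ v = v := by
  simp [householder_mulVec, h]

theorem householder_mul_self (hw : w ⬝ᵥ w = 1) : householder w * householder w = 1 := by
  simp only [householder, sub_mul, mul_sub, one_mul, mul_one, smul_mul_smul_comm,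
    vecMulVec_mul_vecMulVec, hw, one_smul]
  module

theorem det_householder (hw : w ⬝ᵥ w = 1) : (householder w).det = -1 := by
  have : householder w = 1 + replicateCol Unit ((-2 : R) • w) * replicateRow Unit w := by
    rw [householder, ← vecMulVec_eq, sub_eq_add_neg, ← neg_smul, smul_vecMulVec]
  rw [this, det_one_add_replicateCol_mul_replicateRow, dotProduct_smul, hw]
  norm_num

theorem householder_mul_householder_mul_transpose {v : ι → R} (hv : v ⬝ᵥ v = 1)
    (hw : w ⬝ᵥ w = 1) :
    householder v * householder w * (householder v * householder w)ᵀ = 1 := by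
  rw [transpose_mul, transpose_householder, transpose_householder, mul_assoc,
    ← mul_assoc (householder w), householder_mul_self hw, one_mul, householder_mul_self hv]

theorem det_householder_mul_householder {v : ι → R} (hv : v ⬝ᵥ v = 1) (hw : w ⬝ᵥ w = 1) :
    (householder v * householder w).det = 1 := by
  rw [det_mul, det_householder hv, det_householder hw]
  norm_num

end Matrix

theorem Continuous.matrix_householder {X ι R : Type*} [TopologicalSpace X] [Fintype ι]
    [DecidableEq ι] [CommRing R] [TopologicalSpace R] [IsTopologicalRing R] {w : X → ι → R}
    (hw : Continuous w) : Continuous fun x => householder (w x) := by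
  unfold householder
  fun_prop

section PuncturedSphere

variable {m : ℕ}

noncomputable def lowerHemisphereLift (x : EuclideanSpace ℝ (Fin m)) : Fin (m + 1) → ℝ :=
  Fin.cons (-√(1 - ‖x‖ ^ 2)) x.ofLp

noncomputable def ballToSphere (x : EuclideanSpace ℝ (Fin m)) : Fin (m + 1) → ℝ :=
  Fin.cons (2 * ‖x‖ ^ 2 - 1) fun i => 2 * √(1 - ‖x‖ ^ 2) * x i

noncomputable def sphereToBall (y : Fin (m + 1) → ℝ) : EuclideanSpace ℝ (Fin m) :=
  WithLp.toLp 2 fun i => y i.succ / √(2 * (1 - y 0))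

theorem one_sub_norm_sq_nonneg {E : Type*} [SeminormedAddGroup E] {x : E} (hx : ‖x‖ ≤ 1) :
    0 ≤ 1 - ‖x‖ ^ 2 :=
  sub_nonneg.2 (pow_le_one₀ (norm_nonneg x) hx)

theorem dotProduct_self_lowerHemisphereLift {x : EuclideanSpace ℝ (Fin m)} (hx : ‖x‖ ≤ 1) :
    lowerHemisphereLift x ⬝ᵥ lowerHemisphereLift x = 1 := by
  simp only [dotProduct, Fin.sum_univ_succ, lowerHemisphereLift, Fin.cons_zero, Fin.cons_succ,
    ← sq, neg_sq, Real.sq_sqrt (one_sub_norm_sq_nonneg hx), ← EuclideanSpace.real_norm_sq_eq]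
  ring

theorem householder_lowerHemisphereLift_mulVec_single {x : EuclideanSpace ℝ (Fin m)}
    (hx : ‖x‖ ≤ 1) :
    householder (lowerHemisphereLift x) *ᵥ Pi.single 0 1 = ballToSphere x := by
  rw [householder_mulVec, dotProduct_single, mul_one]
  funext i
  cases i using Fin.cases with
  | zero =>
    simp [lowerHemisphereLift, ballToSphere, mul_assoc,
      Real.mul_self_sqrt (one_sub_norm_sq_nonneg hx)]
    ring
  | succ j => simp [lowerHemisphereLift, ballToSphere]

theorem ballToSphere_of_norm_eq_one {x : EuclideanSpace ℝ (Fin m)} (hx : ‖x‖ = 1) :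
    ballToSphere x = Pi.single 0 1 := by
  funext i
  cases i using Fin.cases <;> simp [ballToSphere, hx]
  norm_num

theorem sum_sq_ballToSphere {x : EuclideanSpace ℝ (Fin m)} (hx : ‖x‖ ≤ 1) :
    ∑ i, ballToSphere x i ^ 2 = 1 := by
  simp only [Fin.sum_univ_succ, ballToSphere, Fin.cons_zero, Fin.cons_succ, mul_pow,
    Real.sq_sqrt (one_sub_norm_sq_nonneg hx), ← Finset.mul_sum, ← EuclideanSpace.real_norm_sq_eq]
  ring

theorem ballToSphere_ne_single {x : EuclideanSpace ℝ (Fin m)} (hx : ‖x‖ < 1) :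
    ballToSphere x ≠ Pi.single 0 1 := by
  intro h
  have h0 := congrFun h 0
  simp only [ballToSphere, Fin.cons_zero, Pi.single_eq_same] at h0
  nlinarith [norm_nonneg x]

theorem apply_zero_lt_one_of_sum_sq_eq_one {y : Fin (m + 1) → ℝ} (hy : ∑ i, y i ^ 2 = 1)
    (hne : y ≠ Pi.single 0 1) : y 0 < 1 := by
  rw [Fin.sum_univ_succ] at hy
  have htail : 0 ≤ ∑ j : Fin m, y j.succ ^ 2 := Finset.sum_nonneg fun _ _ => sq_nonneg _
  refine lt_of_le_of_ne (by nlinarith) fun h0 => hne ?_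
  have hzero := (Finset.sum_eq_zero_iff_of_nonneg fun _ _ => sq_nonneg _).1
    (show ∑ j : Fin m, y j.succ ^ 2 = 0 by nlinarith)
  funext i
  cases i using Fin.cases with
  | zero => simp [h0]
  | succ j => simpa [Fin.succ_ne_zero] using hzero j (Finset.mem_univ j)

theorem norm_sq_sphereToBall {y : Fin (m + 1) → ℝ} (hy : ∑ i, y i ^ 2 = 1) (h0 : y 0 < 1) :
    ‖sphereToBall y‖ ^ 2 = (1 + y 0) / 2 := by
  rw [Fin.sum_univ_succ] at hy
  have : 1 - y 0 ≠ 0 := by linarith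
  simp only [EuclideanSpace.real_norm_sq_eq, sphereToBall, div_pow,
    Real.sq_sqrt (show 0 ≤ 2 * (1 - y 0) by linarith), ← Finset.sum_div]
  field_simp
  linear_combination hy

theorem norm_sphereToBall_lt_one {y : Fin (m + 1) → ℝ} (hy : ∑ i, y i ^ 2 = 1)
    (h0 : y 0 < 1) : ‖sphereToBall y‖ < 1 := by
  have h := norm_sq_sphereToBall hy h0
  nlinarith [norm_nonneg (sphereToBall y)]

theorem ballToSphere_sphereToBall {y : Fin (m + 1) → ℝ} (hy : ∑ i, y i ^ 2 = 1)
    (h0 : y 0 < 1) : ballToSphere (sphereToBall y) = y := by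
  have hnorm := norm_sq_sphereToBall hy h0
  have hsqrt : 2 * √(1 - ‖sphereToBall y‖ ^ 2) = √(2 * (1 - y 0)) := by
    rw [hnorm, show 2 * (1 - y 0) = 2 ^ 2 * (1 - (1 + y 0) / 2) by ring,
      Real.sqrt_mul (by norm_num), Real.sqrt_sq zero_le_two]
  have hpos : 0 < √(2 * (1 - y 0)) := Real.sqrt_pos.2 (by linarith)
  funext i
  cases i using Fin.cases with
  | zero =>
    simp only [ballToSphere, Fin.cons_zero, hnorm]
    ring
  | succ j =>
    simp only [ballToSphere, Fin.cons_succ]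
    rw [hsqrt]
    simp only [sphereToBall]
    field_simp

theorem sphereToBall_ballToSphere {x : EuclideanSpace ℝ (Fin m)} (hx : ‖x‖ < 1) :
    sphereToBall (ballToSphere x) = x := by
  have hsqrt : √(2 * (1 - ballToSphere x 0)) = 2 * √(1 - ‖x‖ ^ 2) := by
    rw [ballToSphere, Fin.cons_zero, show 2 * (1 - (2 * ‖x‖ ^ 2 - 1)) = 2 ^ 2 * (1 - ‖x‖ ^ 2) by
      ring, Real.sqrt_mul (by norm_num), Real.sqrt_sq zero_le_two]
  have hpos : 0 < √(1 - ‖x‖ ^ 2) := Real.sqrt_pos.2 (by nlinarith [norm_nonneg x])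
  ext i
  simp only [sphereToBall, hsqrt]
  simp only [ballToSphere, Fin.cons_succ]
  field_simp

theorem continuousOn_sphereToBall :
    ContinuousOn (sphereToBall (m := m)) {y | y 0 < 1} := by
  refine (PiLp.continuous_toLp 2 _).comp_continuousOn (continuousOn_pi.2 fun i => ?_)
  refine (continuous_apply _).continuousOn.div (by fun_prop) fun y hy => ?_
  exact (Real.sqrt_pos.2 (by linarith [show y 0 < 1 from hy])).ne'

theorem continuous_lowerHemisphereLift : Continuous (lowerHemisphereLift (m := m)) := by
  refine continuous_pi fun i => ?_
  cases i using Fin.cases <;>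
    simp only [lowerHemisphereLift, Fin.cons_zero, Fin.cons_succ] <;> fun_prop

theorem continuous_ballToSphere : Continuous (ballToSphere (m := m)) := by
  refine continuous_pi fun i => ?_
  cases i using Fin.cases <;> simp only [ballToSphere, Fin.cons_zero, Fin.cons_succ] <;> fun_prop

noncomputable def ballHomeomorphPuncturedSphere (m : ℕ) :
    ball (0 : EuclideanSpace ℝ (Fin m)) 1 ≃ₜ
      ({y : Fin (m + 1) → ℝ | ∑ i, y i ^ 2 = 1} \ {Pi.single 0 1} : Set (Fin (m + 1) → ℝ)) where
  toFun x := ⟨ballToSphere x, sum_sq_ballToSphere (mem_ball_zero_iff.1 x.2).le,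
    ballToSphere_ne_single (mem_ball_zero_iff.1 x.2)⟩
  invFun y := ⟨sphereToBall y, mem_ball_zero_iff.2 (norm_sphereToBall_lt_one y.2.1
    (apply_zero_lt_one_of_sum_sq_eq_one y.2.1 y.2.2))⟩
  left_inv x := Subtype.ext (sphereToBall_ballToSphere (mem_ball_zero_iff.1 x.2))
  right_inv y := Subtype.ext (ballToSphere_sphereToBall y.2.1
    (apply_zero_lt_one_of_sum_sq_eq_one y.2.1 y.2.2))
  continuous_toFun := (continuous_ballToSphere.comp continuous_subtype_val).subtype_mk _
  continuous_invFun := (continuousOn_sphereToBall.comp_continuous continuous_subtype_val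
    fun y => apply_zero_lt_one_of_sum_sq_eq_one y.2.1 y.2.2).subtype_mk _

noncomputable def attachingMap (u : Fin (m + 1) → ℝ) (x : EuclideanSpace ℝ (Fin m)) :
    Matrix (Fin (m + 1)) (Fin (m + 1)) ℝ :=
  householder (lowerHemisphereLift x) * householder u

theorem continuous_attachingMap (u : Fin (m + 1) → ℝ) : Continuous (attachingMap u) :=
  continuous_lowerHemisphereLift.matrix_householder.mul continuous_const

theorem attachingMap_mulVec_single {u : Fin (m + 1) → ℝ} (hu : u 0 = 0)
    {x : EuclideanSpace ℝ (Fin m)} (hx : ‖x‖ ≤ 1) :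
    attachingMap u x *ᵥ Pi.single 0 1 = ballToSphere x := by
  rw [attachingMap, ← mulVec_mulVec,
    householder_mulVec_of_dotProduct_eq_zero (w := u) (by simp [dotProduct_single, hu]),
    householder_lowerHemisphereLift_mulVec_single hx]

end PuncturedSphere

theorem stmt_0 (n : ℕ) (hn : 3 ≤ n) :
    ∃ ψ : EuclideanSpace ℝ (Fin (n - 1)) → Matrix (Fin n) (Fin n) ℝ,
      ContinuousOn ψ (closedBall 0 1) ∧
      (∀ x ∈ closedBall (0 : EuclideanSpace ℝ (Fin (n - 1))) 1,
        ψ x * (ψ x)ᵀ = 1 ∧ (ψ x).det = 1) ∧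
      (∀ x : EuclideanSpace ℝ (Fin (n - 1)), ‖x‖ = 1 →
        (ψ x).mulVec (Pi.single (⟨0, by omega⟩ : Fin n) 1) =
          Pi.single (⟨0, by omega⟩ : Fin n) 1) ∧
      ∃ φ : (ball (0 : EuclideanSpace ℝ (Fin (n - 1))) 1 :
              Set (EuclideanSpace ℝ (Fin (n - 1)))) ≃ₜ
          ({y : Fin n → ℝ | ∑ i, y i ^ 2 = 1} \
            {Pi.single (⟨0, by omega⟩ : Fin n) 1} : Set (Fin n → ℝ)),
        ∀ x : (ball (0 : EuclideanSpace ℝ (Fin (n - 1))) 1 :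
                Set (EuclideanSpace ℝ (Fin (n - 1)))),
          (φ x : Fin n → ℝ) =
            (ψ (x : EuclideanSpace ℝ (Fin (n - 1)))).mulVec
              (Pi.single (⟨0, by omega⟩ : Fin n) 1) := by
  obtain ⟨m, rfl⟩ : ∃ m, n = m + 1 := ⟨n - 1, by omega⟩
  set u : Fin (m + 1) → ℝ := Pi.single ⟨1, by omega⟩ 1
  have hu : u ⬝ᵥ u = 1 := by simp [u]
  have hu0 : u 0 = 0 := Pi.single_eq_of_ne (by simp [Fin.ext_iff]) 1
  refine ⟨attachingMap u, (continuous_attachingMap u).continuousOn, fun x hx => ?_,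
    fun x hx => ?_, ballHomeomorphPuncturedSphere m, fun x => ?_⟩
  · have hx : ‖x‖ ≤ 1 := mem_closedBall_zero_iff.1 hx
    exact ⟨householder_mul_householder_mul_transpose (dotProduct_self_lowerHemisphereLift hx) hu,
      det_householder_mul_householder (dotProduct_self_lowerHemisphereLift hx) hu⟩
  · exact (attachingMap_mulVec_single hu0 hx.le).trans (ballToSphere_of_norm_eq_one hx)
  · exact (attachingMap_mulVec_single hu0 (mem_ball_zero_iff.1 x.2).le).symm
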